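/- None of the words d_n (n ≥ 2) is a factor of the Fibonacci word, where d_n = 1 p_n 1 for even n and d_n = 0 p_n 0 for odd n, and p_n is the (n)-th bispecial factor of the Fibonacci word. -/

import Mathlib

/-!
A factor `d (n + 1)` of `φ(w)` can be desubstituted to a factor `d n` of `w`. Indeed `φ(w)` parses
uniquely into blocks `01` and `0`, every cut in front of a `0` being a block boundary, and
`d (n + 1) = φ(d n) 0` for even `n`, while `0 d (n + 1) = φ(d n)` for odd `n`. Since `d 2 = 11`
occurs in no image under `φ`, induction shows that no `d n` occurs in any `φ^m(0)`, and every
factor of the Fibonacci word lies in one of these prefixes.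
-/

/-- The Fibonacci morphism on letters: φ(0)=01, φ(1)=0 (0 = `false`, 1 = `true`). -/
def phi : Bool → List Bool
  | false => [false, true]
  | true  => [false]

/-- The Fibonacci morphism extended to words. -/
def phiW (w : List Bool) : List Bool := w.flatMap phi

/-- The finite Fibonacci words: `fibw n = φ^{n-1}(0)` for `n ≥ 1`. -/
def fibw (n : ℕ) : List Bool := phiW^[n - 1] [false]

/-- The bispecial factors of the Fibonacci word. -/
def pbis (n : ℕ) : List Bool := (fibw n).dropLast.dropLast

/-- The minimal forbidden words of the Fibonacci word:
`d n = 1 p_n 1` for even `n`, `d n = 0 p_n 0` for odd `n`. -/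
def dF (n : ℕ) : List Bool :=
  if n % 2 = 0 then [true] ++ pbis n ++ [true] else [false] ++ pbis n ++ [false]

/-- The finite word `u` is a prefix of the infinite word `x`. -/
def IsPrefixI (u : List Bool) (x : ℕ → Bool) : Prop :=
  ∀ i, i < u.length → u.getD i false = x i

/-- `f` is the Fibonacci word: every `φ^n(0)` is a prefix of `f`. -/
def IsFibWord (f : ℕ → Bool) : Prop :=
  ∀ n, IsPrefixI (phiW^[n] [false]) f

/-- The finite word `u` is a factor of the infinite word `x`. -/
def IsFactorI (u : List Bool) (x : ℕ → Bool) : Prop :=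
  ∃ k, ∀ i, i < u.length → u.getD i false = x (k + i)

lemma phiW_nil : phiW [] = [] := rfl

lemma phiW_cons (a : Bool) (w : List Bool) : phiW (a :: w) = phi a ++ phiW w := rfl

lemma phiW_append (u v : List Bool) : phiW (u ++ v) = phiW u ++ phiW v :=
  List.flatMap_append

lemma phiW_cons_eq (a : Bool) (w : List Bool) : ∃ t, phiW (a :: w) = false :: t := by
  cases a <;> exact ⟨_, rfl⟩

lemma head?_phiW_ne_true (w : List Bool) : (phiW w).head? ≠ some true := by
  cases w with
  | nil => simp [phiW_nil]
  | cons a w => obtain ⟨t, ht⟩ := phiW_cons_eq a w; simp [ht]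

lemma length_le_length_phiW (w : List Bool) : w.length ≤ (phiW w).length := by
  induction w with
  | nil => simp
  | cons a w ih => cases a <;> simp [phiW_cons, phi] <;> omega

lemma isChain_phiW (w : List Bool) : (phiW w).IsChain (fun a b => a = true → b = false) := by
  induction w with
  | nil => simp [phiW_nil]
  | cons a w ih =>
    rw [phiW_cons]
    refine List.IsChain.append (by cases a <;> simp [phi]) ih fun _ _ b hb _ => ?_
    cases b
    · rfl
    · exact absurd hb (head?_phiW_ne_true w)

lemma phiW_ne_append_true_true (w x y : List Bool) : phiW w ≠ x ++ true :: true :: y := by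
  intro h
  have := (isChain_phiW w).infix (show [true, true] <:+: phiW w from ⟨x, y, by simp [h]⟩)
  simp at this

lemma phiW_injective : Function.Injective phiW := by
  intro v₁
  induction v₁ with
  | nil =>
    rintro (_ | ⟨b, v₂⟩) h
    · rfl
    · obtain ⟨t, ht⟩ := phiW_cons_eq b v₂
      simp [phiW_nil, ht] at h
  | cons a v₁ ih =>
    rintro (_ | ⟨b, v₂⟩) h
    · obtain ⟨t, ht⟩ := phiW_cons_eq a v₁
      simp [phiW_nil, ht] at h
    · rw [phiW_cons, phiW_cons] at h
      cases a <;> cases b <;> simp only [phi, List.cons_append, List.nil_append,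
        List.cons.injEq, true_and] at h
      · rw [ih h]
      · exact absurd (congrArg List.head? h).symm (by simpa using head?_phiW_ne_true v₂)
      · exact absurd (congrArg List.head? h) (by simpa using head?_phiW_ne_true v₁)
      · rw [ih h]

/-- Every block `φ(a)` starts with the only `0` it contains, so a cut of `φ(w)` in front of a
`0` is a cut between blocks. -/
lemma phiW_eq_append {w z y : List Bool} (h : phiW w = z ++ y) (hy : y.head? ≠ some true) :
    ∃ u v, w = u ++ v ∧ phiW u = z ∧ phiW v = y := by
  induction w generalizing z with
  | nil =>
    obtain ⟨rfl, rfl⟩ := List.append_eq_nil_iff.mp h.symm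
    exact ⟨[], [], rfl, rfl, rfl⟩
  | cons a w ih =>
    rcases z with _ | ⟨c, z⟩
    · exact ⟨[], a :: w, rfl, rfl, h⟩
    rw [phiW_cons] at h
    cases a with
    | true =>
      simp only [phi, List.cons_append, List.nil_append, List.cons.injEq] at h
      obtain ⟨rfl, h⟩ := h
      obtain ⟨u, v, rfl, rfl, rfl⟩ := ih h
      exact ⟨true :: u, v, rfl, rfl, rfl⟩
    | false =>
      rcases z with _ | ⟨d, z⟩
      · obtain ⟨-, rfl⟩ : false = c ∧ true :: phiW w = y := by simpa [phi] using h
        simp at hy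
      simp only [phi, List.cons_append, List.nil_append, List.cons.injEq] at h
      obtain ⟨rfl, rfl, h⟩ := h
      obtain ⟨u, v, rfl, rfl, rfl⟩ := ih h
      exact ⟨false :: u, v, rfl, rfl, rfl⟩

lemma infix_of_phiW_eq {w x u y : List Bool} (h : phiW w = x ++ phiW u ++ y)
    (hy : y.head? ≠ some true) : u <:+: w := by
  obtain ⟨w₁, w₂, rfl, -, h₂⟩ :=
    phiW_eq_append (z := x) (y := phiW u ++ y) (by simpa using h)
    (by
      cases u with
      | nil => simpa [phiW_nil] using hy
      | cons a u => obtain ⟨t, ht⟩ := phiW_cons_eq a u; simp [ht])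
  obtain ⟨v₁, v₂, rfl, h₁, -⟩ := phiW_eq_append h₂ hy
  exact ⟨w₁, v₂, by rw [phiW_injective h₁]; simp⟩

lemma fibw_succ {n : ℕ} (hn : 1 ≤ n) : fibw (n + 1) = phiW (fibw n) := by
  obtain ⟨m, rfl⟩ := Nat.exists_eq_add_of_le' hn
  simp only [fibw, Nat.add_sub_cancel, Function.iterate_succ_apply']

/-- The last two letters of `fibw n` for `n ≥ 2`. -/
def fibSuffix (n : ℕ) : List Bool := if n % 2 = 0 then [false, true] else [true, false]

lemma phiW_fibSuffix (n : ℕ) : phiW (fibSuffix n) = false :: fibSuffix (n + 1) := by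
  rcases Nat.mod_two_eq_zero_or_one n with h | h <;>
    simp [fibSuffix, h, Nat.succ_mod_two_eq_zero_iff, phiW, phi]

lemma fibw_eq_pbis_append {n : ℕ} (hn : 2 ≤ n) : fibw n = pbis n ++ fibSuffix n := by
  suffices ∃ p, fibw n = p ++ fibSuffix n by
    obtain ⟨p, hp⟩ := this
    have : pbis n = p := by
      rcases Nat.mod_two_eq_zero_or_one n with h | h <;>
        simp [pbis, hp, fibSuffix, h, List.dropLast_append_of_ne_nil]
    rw [this, hp]
  induction n, hn using Nat.le_induction with
  | base => exact ⟨[], rfl⟩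
  | succ n hn ih =>
    obtain ⟨p, hp⟩ := ih
    refine ⟨phiW p ++ [false], ?_⟩
    rw [fibw_succ (by omega), hp, phiW_append, phiW_fibSuffix]
    simp

lemma pbis_succ {n : ℕ} (hn : 2 ≤ n) : pbis (n + 1) = phiW (pbis n) ++ [false] := by
  have h := fibw_eq_pbis_append (n := n + 1) (by omega)
  rw [fibw_succ (by omega), fibw_eq_pbis_append hn, phiW_append, phiW_fibSuffix] at h
  exact List.append_cancel_right (by simpa using h.symm)

lemma dF_of_even {n : ℕ} (h : n % 2 = 0) : dF n = true :: pbis n ++ [true] := by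
  simp [dF, h]

lemma dF_of_odd {n : ℕ} (h : n % 2 = 1) : dF n = false :: pbis n ++ [false] := by
  simp [dF, h]

lemma dF_succ_of_even {n : ℕ} (hn : 2 ≤ n) (h : n % 2 = 0) :
    dF (n + 1) = phiW (dF n) ++ [false] := by
  rw [dF_of_odd (by omega), dF_of_even h, pbis_succ hn]
  simp [phiW_append, phiW_cons, phiW_nil, phi]

lemma phiW_dF_of_odd {n : ℕ} (hn : 2 ≤ n) (h : n % 2 = 1) :
    phiW (dF n) = false :: dF (n + 1) := by
  rw [dF_of_even (n := n + 1) (by omega), dF_of_odd h, pbis_succ hn]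
  simp [phiW_append, phiW_cons, phiW_nil, phi]

lemma two_le_length_dF (n : ℕ) : 2 ≤ (dF n).length := by
  unfold dF; split <;> simp

lemma infix_of_dF_succ_infix_phiW {n : ℕ} (hn : 2 ≤ n) {w : List Bool}
    (h : dF (n + 1) <:+: phiW w) : dF n <:+: w := by
  obtain ⟨x, y, hxy⟩ := h
  rcases Nat.mod_two_eq_zero_or_one n with hev | hodd
  · rw [dF_succ_of_even hn hev] at hxy
    exact infix_of_phiW_eq (x := x) (y := false :: y) (by simp [← hxy]) (by simp)
  · -- `φ(w)` starts with `0` and avoids `11`, so the occurrence of `1 p 1` is preceded by a `0`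
    -- and not followed by a `1`; together with that `0` it reads `φ(0 p 0)`.
    have hd := dF_of_even (n := n + 1) (by omega)
    rcases List.eq_nil_or_concat x with rfl | ⟨x, c, rfl⟩
    · exact absurd (congrArg List.head? hxy) (by simpa [hd] using (head?_phiW_ne_true w).symm)
    cases c
    · refine infix_of_phiW_eq (x := x) (y := y) (by simp [← hxy, phiW_dF_of_odd hn hodd]) ?_
      intro hy
      obtain ⟨y, rfl⟩ := List.head?_eq_some_iff.mp hy
      exact phiW_ne_append_true_true w (x ++ [false] ++ true :: pbis (n + 1)) y
        (by simp [← hxy, hd])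
    · exact (phiW_ne_append_true_true w x (pbis (n + 1) ++ [true] ++ y)
        (by simp [← hxy, hd])).elim

lemma dF_not_infix_iterate_phiW {n : ℕ} (hn : 2 ≤ n) :
    ∀ m, ¬ dF n <:+: phiW^[m] [false] := by
  have not_infix_zero (n : ℕ) : ¬ dF n <:+: [false] := fun h =>
    Nat.not_le.mpr (two_le_length_dF n) h.length_le
  induction n, hn using Nat.le_induction with
  | base =>
    rintro (_ | m) ⟨x, y, h⟩
    · exact not_infix_zero 2 ⟨x, y, h⟩
    · rw [Function.iterate_succ_apply'] at h
      exact phiW_ne_append_true_true _ x y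
        (by rw [← h, show dF 2 = [true, true] from rfl]; simp)
  | succ n hn ih =>
    rintro (_ | m) h
    · exact not_infix_zero (n + 1) h
    · rw [Function.iterate_succ_apply'] at h
      exact ih m (infix_of_dF_succ_infix_phiW hn h)

lemma lt_length_iterate_phiW (m : ℕ) : m < (phiW^[m] [false]).length := by
  suffices ∃ t, phiW^[m] [false] = false :: t ∧ m ≤ t.length by
    obtain ⟨t, ht, hm⟩ := this
    simpa [ht] using hm
  induction m with
  | zero => exact ⟨[], rfl, le_rfl⟩
  | succ m ih =>
    obtain ⟨t, ht, hm⟩ := ih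
    refine ⟨true :: phiW t, by rw [Function.iterate_succ_apply', ht]; rfl, ?_⟩
    simpa using hm.trans (length_le_length_phiW t)

lemma IsPrefixI.infix_of_getD_eq {p u : List Bool} {x : ℕ → Bool} (hp : IsPrefixI p x) {k : ℕ}
    (hu : ∀ i < u.length, u.getD i false = x (k + i)) (hlen : k + u.length ≤ p.length) :
    u <:+: p := by
  have : u = (p.drop k).take u.length := by
    refine List.ext_getElem (by simp only [List.length_take, List.length_drop]; omega)
      fun i h₁ h₂ => ?_
    rw [List.getElem_take, List.getElem_drop, ← List.getD_eq_getElem _ false,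
      ← List.getD_eq_getElem _ false, hp _ (by omega), hu i h₁]
  rw [this]
  exact (List.take_prefix _ _).isInfix.trans (List.drop_suffix k p).isInfix

theorem fib_forbidden_words_not_factors (f : ℕ → Bool) (hf : IsFibWord f)
    (n : ℕ) (hn : 2 ≤ n) : ¬ IsFactorI (dF n) f := by
  rintro ⟨k, hk⟩
  set m := k + (dF n).length
  exact dF_not_infix_iterate_phiW hn m
    ((hf m).infix_of_getD_eq hk (lt_length_iterate_phiW m).le)
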